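/- Let c_{ab} ≥ 0 for 0 ≤ a, b ≤ 3 with c₁₁ = 0, let X₁ > 0 be constant, let 0 < κ_min < κ_max and 0 < η_min < η_max, and let X₀, X₂ : [0,T] → ℝ be continuously differentiable and satisfy the closed moment system X₀′ = −(1/2) ∑_{a,b=0}^{3} c_{ab} X_a X_b, X₂′ = ∑_{a,b=0}^{3} c_{ab} X_{a+1} X_{b+1}, with X₃, X₄ given by the clamped Gamma closure. Assume X₀(t) ≥ 0 and X₂(t) ≥ 0 on [0,T]. Then there exist constants A ≥ 0 and B > 0, depending only on the c_{ab}, X₀(0), X₁, and the clamp bounds κ_min, κ_max, η_min, η_max, such that X₂(t) ≤ (X₂(0) + A/B) e^{Bt} for all t ∈ [0,T]; in particular X₂ does not blow up on [0,T]. -/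
import Mathlib


/-- The moments `X₀, X₁, X₂` together with the higher moments `X₃, X₄` given
by the clamped Gamma distribution closure. -/
noncomputable def closureMoments (κmin κmax ηmin ηmax X₀ X₁ X₂ : ℝ) :
    ℕ → ℝ := fun k =>
  let κ : ℝ := max (min (X₁ ^ 2 / (X₀ * X₂ - X₁ ^ 2)) κmax) κmin
  let η : ℝ := max (min (X₂ / X₁ - X₁ / X₀) ηmax) ηmin
  match k with
  | 0 => X₀
  | 1 => X₁
  | 2 => X₂
  | 3 => X₀ * η ^ 3 * (κ * (κ + 1) * (κ + 2))
  | 4 => X₀ * η ^ 4 * (κ * (κ + 1) * (κ + 2) * (κ + 3))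
  | _ => 0

lemma closureMoments_bounds (κmin κmax ηmin ηmax x0 x1 x2 M : ℝ)
    (hκ0 : 0 < κmin) (hκ : κmin < κmax) (hη0 : 0 < ηmin) (hη : ηmin < ηmax)
    (hx0 : 0 ≤ x0) (hx0M : x0 ≤ M) (hx1 : 0 < x1) (hx2 : 0 ≤ x2) :
    (∀ k, 0 ≤ closureMoments κmin κmax ηmin ηmax x0 x1 x2 k) ∧
    closureMoments κmin κmax ηmin ηmax x0 x1 x2 3
      ≤ M * ηmax ^ 3 * (κmax * (κmax + 1) * (κmax + 2)) ∧
    closureMoments κmin κmax ηmin ηmax x0 x1 x2 4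
      ≤ M * ηmax ^ 4 * (κmax * (κmax + 1) * (κmax + 2) * (κmax + 3)) := by
  set κ : ℝ := max (min (x1 ^ 2 / (x0 * x2 - x1 ^ 2)) κmax) κmin with hκdef
  set η : ℝ := max (min (x2 / x1 - x1 / x0) ηmax) ηmin with hηdef
  have hκl : κmin ≤ κ := le_max_right _ _
  have hκu : κ ≤ κmax := max_le (min_le_right _ _) hκ.le
  have hηl : ηmin ≤ η := le_max_right _ _
  have hηu : η ≤ ηmax := max_le (min_le_right _ _) hη.le
  have hκnn : 0 ≤ κ := le_trans hκ0.le hκl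
  have hηnn : 0 ≤ η := le_trans hη0.le hηl
  have hM : 0 ≤ M := hx0.trans hx0M
  have hκm : 0 < κmax := hκ0.trans hκ
  have hηm : 0 < ηmax := hη0.trans hη
  have hQ3 : 0 ≤ κmax * (κmax + 1) * (κmax + 2) :=
    (mul_pos (mul_pos hκm (by linarith)) (by linarith)).le
  have hMη3 : 0 ≤ M * ηmax ^ 3 := by positivity
  have hMη4 : 0 ≤ M * ηmax ^ 4 := by positivity
  have hP3 : κ * (κ + 1) * (κ + 2) ≤ κmax * (κmax + 1) * (κmax + 2) := by
    have h1 : κ * (κ + 1) ≤ κmax * (κmax + 1) :=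
      mul_le_mul hκu (by linarith) (by linarith) (by linarith)
    exact mul_le_mul h1 (by linarith) (by linarith) (by nlinarith)
  have hP4 : κ * (κ + 1) * (κ + 2) * (κ + 3)
      ≤ κmax * (κmax + 1) * (κmax + 2) * (κmax + 3) := by
    refine mul_le_mul hP3 (by linarith) (by linarith) hQ3
  have hη3 : η ^ 3 ≤ ηmax ^ 3 := pow_le_pow_left₀ hηnn hηu 3
  have hη4 : η ^ 4 ≤ ηmax ^ 4 := pow_le_pow_left₀ hηnn hηu 4
  refine ⟨?_, ?_, ?_⟩
  · intro k
    match k with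
    | 0 => simpa [closureMoments] using hx0
    | 1 => simpa [closureMoments] using hx1.le
    | 2 => simpa [closureMoments] using hx2
    | 3 =>
      show 0 ≤ x0 * η ^ 3 * (κ * (κ + 1) * (κ + 2))
      positivity
    | 4 =>
      show 0 ≤ x0 * η ^ 4 * (κ * (κ + 1) * (κ + 2) * (κ + 3))
      positivity
    | (n + 5) => simp [closureMoments]
  · show x0 * η ^ 3 * (κ * (κ + 1) * (κ + 2))
      ≤ M * ηmax ^ 3 * (κmax * (κmax + 1) * (κmax + 2))
    refine mul_le_mul (mul_le_mul hx0M hη3 (by positivity) hM) hP3 (by positivity) hMη3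
  · show x0 * η ^ 4 * (κ * (κ + 1) * (κ + 2) * (κ + 3))
      ≤ M * ηmax ^ 4 * (κmax * (κmax + 1) * (κmax + 2) * (κmax + 3))
    refine mul_le_mul (mul_le_mul hx0M hη4 (by positivity) hM) hP4 (by positivity) hMη4

/-- For the closed moment coalescence system with nonnegative kernel weights
and `c₁₁ = 0`, the second moment `X₂` does not blow up: there are constants
`A ≥ 0` and `B > 0`, depending only on the `c_{ab}`, `X₀(0)`, `X₁` and the
clamp bounds, with `X₂(t) ≤ (X₂(0) + A/B) e^{Bt}` on `[0,T]`. -/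
theorem coalescence_X2_no_blowup (c : Fin 4 → Fin 4 → ℝ)
    (hc : ∀ a b, 0 ≤ c a b) (hc11 : c 1 1 = 0) (X₁ : ℝ) (hX₁ : 0 < X₁)
    (κmin κmax ηmin ηmax : ℝ)
    (hκ0 : 0 < κmin) (hκ : κmin < κmax) (hη0 : 0 < ηmin) (hη : ηmin < ηmax)
    (X₀init : ℝ) :
    ∃ A : ℝ, 0 ≤ A ∧ ∃ B : ℝ, 0 < B ∧
      ∀ (T : ℝ) (X₀ X₂ : ℝ → ℝ), X₀ 0 = X₀init →
        (∀ t ∈ Set.Icc (0 : ℝ) T,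
          HasDerivAt X₀
            (-(1 / 2) * ∑ a : Fin 4, ∑ b : Fin 4,
              c a b * closureMoments κmin κmax ηmin ηmax (X₀ t) X₁ (X₂ t) a *
                closureMoments κmin κmax ηmin ηmax (X₀ t) X₁ (X₂ t) b) t) →
        (∀ t ∈ Set.Icc (0 : ℝ) T,
          HasDerivAt X₂
            (∑ a : Fin 4, ∑ b : Fin 4,
              c a b *
                closureMoments κmin κmax ηmin ηmax (X₀ t) X₁ (X₂ t) (a + 1) *
                closureMoments κmin κmax ηmin ηmax (X₀ t) X₁ (X₂ t) (b + 1)) t) →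
        (∀ t ∈ Set.Icc (0 : ℝ) T, 0 ≤ X₀ t) →
        (∀ t ∈ Set.Icc (0 : ℝ) T, 0 ≤ X₂ t) →
        ∀ t ∈ Set.Icc (0 : ℝ) T,
          X₂ t ≤ (X₂ 0 + A / B) * Real.exp (B * t) := by
  set M : ℝ := max X₀init 0 with hMdef
  set M₃ : ℝ := M * ηmax ^ 3 * (κmax * (κmax + 1) * (κmax + 2)) with hM3def
  set M₄ : ℝ := M * ηmax ^ 4 * (κmax * (κmax + 1) * (κmax + 2) * (κmax + 3)) with hM4def
  set K : ℝ := max X₁ (max M₃ M₄) with hKdef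
  have hK0 : 0 < K := lt_of_lt_of_le hX₁ (le_max_left _ _)
  set S : ℝ := ∑ a : Fin 4, ∑ b : Fin 4, c a b with hSdef
  have hS : 0 ≤ S :=
    Finset.sum_nonneg fun a _ => Finset.sum_nonneg fun b _ => hc a b
  refine ⟨S * K ^ 2, mul_nonneg hS (by positivity), S * K + 1,
    by nlinarith, ?_⟩
  set A : ℝ := S * K ^ 2 with hAdef
  set B : ℝ := S * K + 1 with hBdef
  have hA : 0 ≤ A := mul_nonneg hS (by positivity)
  have hB : 0 < B := by nlinarith
  have hX0initM : X₀init ≤ M := le_max_left _ _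
  have hKX1 : X₁ ≤ K := le_max_left _ _
  have hKM3 : M₃ ≤ K := (le_max_left M₃ M₄).trans (le_max_right _ _)
  have hKM4 : M₄ ≤ K := (le_max_right M₃ M₄).trans (le_max_right _ _)
  clear_value M M₃ M₄ K S A B
  intro T X₀ X₂ hinit hd0 hd2 h0 h2 t ht
  have hT : 0 ≤ T := le_trans ht.1 ht.2
  -- X₀ is antitone, hence X₀ s ≤ M on [0,T]
  have hX0cont : ContinuousOn X₀ (Set.Icc 0 T) := fun s hs =>
    (hd0 s hs).continuousAt.continuousWithinAt
  have hanti : AntitoneOn X₀ (Set.Icc 0 T) := by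
    apply antitoneOn_of_deriv_nonpos (convex_Icc 0 T) hX0cont
    · intro s hs
      rw [interior_Icc] at hs
      exact (hd0 s (Set.Ioo_subset_Icc_self hs)).differentiableAt.differentiableWithinAt
    · intro s hs
      rw [interior_Icc] at hs
      have hs' := Set.Ioo_subset_Icc_self hs
      rw [(hd0 s hs').deriv]
      have hnn : 0 ≤ ∑ a : Fin 4, ∑ b : Fin 4,
          c a b * closureMoments κmin κmax ηmin ηmax (X₀ s) X₁ (X₂ s) a *
            closureMoments κmin κmax ηmin ηmax (X₀ s) X₁ (X₂ s) b := by
        obtain ⟨hY, -, -⟩ := closureMoments_bounds κmin κmax ηmin ηmax (X₀ s) X₁ (X₂ s)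
          (X₀ s) hκ0 hκ hη0 hη (h0 s hs') le_rfl hX₁ (h2 s hs')
        exact Finset.sum_nonneg fun a _ => Finset.sum_nonneg fun b _ =>
          mul_nonneg (mul_nonneg (hc a b) (hY a)) (hY b)
      linarith
  have hX0M : ∀ s ∈ Set.Icc (0 : ℝ) T, X₀ s ≤ M := fun s hs => by
    have := hanti (Set.left_mem_Icc.2 hT) hs hs.1
    rw [hinit] at this
    exact this.trans hX0initM
  -- the derivative of X₂
  set D : ℝ → ℝ := fun s => ∑ a : Fin 4, ∑ b : Fin 4,
      c a b * closureMoments κmin κmax ηmin ηmax (X₀ s) X₁ (X₂ s) (a + 1) *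
        closureMoments κmin κmax ηmin ηmax (X₀ s) X₁ (X₂ s) (b + 1) with hDdef
  have hDbounds : ∀ s ∈ Set.Icc (0 : ℝ) T, 0 ≤ D s ∧ D s ≤ B * X₂ s + A := by
    intro s hs
    obtain ⟨hY, hY3, hY4⟩ := closureMoments_bounds κmin κmax ηmin ηmax (X₀ s) X₁ (X₂ s)
      M hκ0 hκ hη0 hη (h0 s hs) (hX0M s hs) hX₁ (h2 s hs)
    set Y : ℕ → ℝ := closureMoments κmin κmax ηmin ηmax (X₀ s) X₁ (X₂ s) with hYdef
    have hDs : D s = ∑ a : Fin 4, ∑ b : Fin 4,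
        c a b * Y ((a : ℕ) + 1) * Y ((b : ℕ) + 1) := rfl
    have hY1 : Y 1 = X₁ := rfl
    have hY2 : Y 2 = X₂ s := rfl
    clear_value Y
    rw [← hM3def] at hY3
    rw [← hM4def] at hY4
    have h2s : 0 ≤ X₂ s := h2 s hs
    rw [hDs]
    clear hDs hYdef hDdef hd0 hd2 hX0cont hanti hX0M hinit h0 h2
    clear D
    have hKa : ∀ a : Fin 4, a ≠ 1 → Y (a + 1) ≤ K := by
      intro a ha
      fin_cases a
      · exact le_of_eq_of_le hY1 hKX1
      · exact absurd rfl ha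
      · exact hY3.trans hKM3
      · exact hY4.trans hKM4
    have hterm : ∀ a b : Fin 4,
        c a b * Y (a + 1) * Y (b + 1) ≤ c a b * (K ^ 2 + K * X₂ s) := by
      intro a b
      rcases eq_or_ne a 1 with rfl | ha
      · rcases eq_or_ne b 1 with rfl | hb
        · rw [hc11]; simp
        · have h1 : Y (((1 : Fin 4) : ℕ) + 1) = X₂ s := hY2
          rw [h1, mul_assoc]
          refine mul_le_mul_of_nonneg_left ?_ (hc 1 b)
          calc X₂ s * Y ((b : ℕ) + 1) ≤ X₂ s * K :=
                mul_le_mul_of_nonneg_left (hKa b hb) h2s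
            _ = K * X₂ s := mul_comm _ _
            _ ≤ K ^ 2 + K * X₂ s := le_add_of_nonneg_left (by positivity)
      · rcases eq_or_ne b 1 with rfl | hb
        · have h1 : Y (((1 : Fin 4) : ℕ) + 1) = X₂ s := hY2
          rw [h1, mul_assoc]
          refine mul_le_mul_of_nonneg_left ?_ (hc a 1)
          calc Y ((a : ℕ) + 1) * X₂ s ≤ K * X₂ s :=
                mul_le_mul_of_nonneg_right (hKa a ha) h2s
            _ ≤ K ^ 2 + K * X₂ s := le_add_of_nonneg_left (by positivity)
        · rw [mul_assoc]
          refine mul_le_mul_of_nonneg_left ?_ (hc a b)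
          calc Y ((a : ℕ) + 1) * Y ((b : ℕ) + 1) ≤ K * K :=
                mul_le_mul (hKa a ha) (hKa b hb) (hY _) hK0.le
            _ = K ^ 2 := (sq K).symm
            _ ≤ K ^ 2 + K * X₂ s := le_add_of_nonneg_right (mul_nonneg hK0.le h2s)
    constructor
    · exact Finset.sum_nonneg fun a _ => Finset.sum_nonneg fun b _ =>
        mul_nonneg (mul_nonneg (hc a b) (hY _)) (hY _)
    · calc (∑ a : Fin 4, ∑ b : Fin 4,
            c a b * Y ((a : ℕ) + 1) * Y ((b : ℕ) + 1)) ≤ ∑ a : Fin 4, ∑ b : Fin 4, c a b * (K ^ 2 + K * X₂ s) :=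
            Finset.sum_le_sum fun a _ => Finset.sum_le_sum fun b _ => hterm a b
        _ = S * (K ^ 2 + K * X₂ s) := by
            rw [hSdef]; simp [Finset.sum_mul]
        _ ≤ B * X₂ s + A := by
            rw [hAdef, hBdef]
            have hexp : S * (K ^ 2 + K * X₂ s)
                = S * K ^ 2 + S * K * X₂ s := by ring
            have h1 : S * K * X₂ s ≤ (S * K + 1) * X₂ s := by
              have : 0 ≤ X₂ s := h2s
              nlinarith
            linarith
  -- Gronwall
  have hX2cont : ContinuousOn X₂ (Set.Icc 0 T) := fun s hs =>
    (hd2 s hs).continuousAt.continuousWithinAt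
  have hf' : ∀ s ∈ Set.Ico (0 : ℝ) T, HasDerivWithinAt X₂ (D s) (Set.Ici s) s :=
    fun s hs => (hd2 s (Set.Ico_subset_Icc_self hs)).hasDerivWithinAt
  have ha : ‖X₂ 0‖ ≤ X₂ 0 := by
    rw [Real.norm_eq_abs, abs_of_nonneg (h2 0 ⟨le_refl 0, hT⟩)]
  have hbound : ∀ s ∈ Set.Ico (0 : ℝ) T, ‖D s‖ ≤ B * ‖X₂ s‖ + A := by
    intro s hs
    obtain ⟨hDnn, hDle⟩ := hDbounds s (Set.Ico_subset_Icc_self hs)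
    rw [Real.norm_eq_abs, Real.norm_eq_abs, abs_of_nonneg hDnn,
      abs_of_nonneg (h2 s (Set.Ico_subset_Icc_self hs))]
    exact hDle
  have hg := norm_le_gronwallBound_of_norm_deriv_right_le hX2cont hf' ha hbound t ht
  rw [Real.norm_eq_abs, abs_of_nonneg (h2 t ht)] at hg
  rw [gronwallBound_of_K_ne_0 hB.ne'] at hg
  simp only [sub_zero] at hg
  have hexp : 0 < Real.exp (B * t) := Real.exp_pos _
  have hAB : 0 ≤ A / B := div_nonneg hA hB.le
  nlinarith [hg, hAB, hexp]
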